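/- arXiv:2101.11329 — 6 statements merged into one kernel-verified Lean document; each statement's English description precedes it below -/
import Mathlib

section
/- Let A be a minimal ideal of a (right) Leibniz algebra L. Then either [L, A] = 0, or [x, a] = -[a, x] for all a in A and x in L. -/
/-- Barnes' lemma: if `A` is a minimal ideal of a right Leibniz algebra `L`, then
either `[L, A] = 0` or `[x,a] = -[a,x]` for all `a ∈ A`, `x ∈ L`. -/
theorem minimal_ideal_alternative {K : Type*} [Field K] {L : Type*}
    [AddCommGroup L] [Module K L] (b : L →ₗ[K] L →ₗ[K] L)
    (hb : ∀ x y z : L, b x (b y z) = b (b x y) z - b (b x z) y)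
    (A : Submodule K L) (hA0 : A ≠ ⊥)
    (hAideal : ∀ a ∈ A, ∀ x : L, b a x ∈ A ∧ b x a ∈ A)
    (hmin : ∀ B : Submodule K L, B ≤ A → (∀ c ∈ B, ∀ x : L, b c x ∈ B ∧ b x c ∈ B) →
      B = ⊥ ∨ B = A) :
    (∀ x : L, ∀ a ∈ A, b x a = 0) ∨ (∀ a ∈ A, ∀ x : L, b x a = -(b a x)) := by
  classical
  set S : Set L := { z | ∃ a ∈ A, ∃ x : L, z = b a x + b x a } with hS
  set D : Submodule K L := Submodule.span K S with hD
  -- left multiplications kill symmetrized brackets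
  have key : ∀ y z w : L, b y (b z w + b w z) = 0 := by
    intro y z w
    rw [map_add, hb y z w, hb y w z]
    abel
  have hDA : D ≤ A := by
    apply Submodule.span_le.2
    rintro _ ⟨a, ha, x, rfl⟩
    exact A.add_mem (hAideal a ha x).1 (hAideal a ha x).2
  have hker : ∀ y : L, ∀ c ∈ D, b y c = 0 := by
    intro y c hc
    have h : D ≤ LinearMap.ker (b y) := by
      apply Submodule.span_le.2
      rintro _ ⟨a, ha, x, rfl⟩
      exact key y a x
    exact h hc
  have hright : ∀ y : L, ∀ c ∈ D, b c y ∈ D := by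
    intro y c hc
    have h : D ≤ Submodule.comap (b.flip y) D := by
      apply Submodule.span_le.2
      rintro _ ⟨a, ha, x, rfl⟩
      show b.flip y (b a x + b x a) ∈ D
      rw [LinearMap.flip_apply]
      have e : b (b a x + b x a) y
          = (b a (b x y) + b (b x y) a) + (b (b a y) x + b x (b a y)) := by
        have h1 := hb a x y
        have h2 := hb x a y
        rw [eq_sub_iff_add_eq] at h1 h2
        rw [map_add, LinearMap.add_apply, ← h1, ← h2]
        abel
      rw [e]
      exact D.add_mem
        (Submodule.subset_span ⟨a, ha, b x y, rfl⟩)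
        (Submodule.subset_span ⟨b a y, (hAideal a ha y).1, x, rfl⟩)
    exact h hc
  have hideal : ∀ c ∈ D, ∀ x : L, b c x ∈ D ∧ b x c ∈ D := by
    intro c hc x
    refine ⟨hright x c hc, ?_⟩
    rw [hker x c hc]
    exact D.zero_mem
  rcases hmin D hDA hideal with hbot | heq
  · right
    intro a ha x
    have hmem : b a x + b x a ∈ D := Submodule.subset_span ⟨a, ha, x, rfl⟩
    rw [hbot, Submodule.mem_bot] at hmem
    exact eq_neg_of_add_eq_zero_right hmem
  · left
    intro x a ha
    exact hker x a (heq ▸ ha)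
end

section
/- Let L be a two-dimensional non-Lie (right) Leibniz algebra over a field F. Then L has at most two proper nonzero subalgebras. Consequently, L is not lattice isomorphic to any Lie algebra of dimension greater than one over an infinite field, since such a Lie algebra has more than two proper nonzero subalgebras. -/
/-!
Pick `x` with `e := [x, x] ≠ 0`. The right Leibniz identity gives `[z, e] = 0` for every `z`,
hence `x, e` is a basis, `[e, x] = β e`, and `[s x + t e, s x + t e] = s (s + t β) e`.
A line `K v` with `v = s x + t e` is a subalgebra iff `[v, v] ∈ K v`; as `[v, v] ∈ K e`, this
forces `s = 0` or `s + t β = 0`, i.e. `K v = K e` or `K v = K (β x - e)`. So the subalgebra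
lattice of `L` is finite, whereas every line of a Lie algebra is a subalgebra and a space of
dimension `> 1` over an infinite field has infinitely many lines.
-/

/-- A subalgebra of a Leibniz algebra: a submodule closed under the bracket. -/
def IsSubalg {K : Type*} [Field K] {L : Type*} [AddCommGroup L] [Module K L]
    (b : L →ₗ[K] L →ₗ[K] L) (S : Submodule K L) : Prop :=
  ∀ x ∈ S, ∀ y ∈ S, b x y ∈ S

open Submodule

section LinearAlgebra

variable {K : Type*} [Field K] {V : Type*} [AddCommGroup V] [Module K V]

lemma exists_smul_add_smul_eq_of_finrank_eq_two (hdim : Module.finrank K V = 2) {u w : V}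
    (hli : LinearIndependent K ![u, w]) (v : V) : ∃ s t : K, s • u + t • w = v := by
  have htop := hli.span_eq_top_of_card_eq_finrank (by simp [hdim])
  rw [Matrix.range_cons_cons_empty] at htop
  exact mem_span_pair.1 (htop ▸ mem_top)

lemma Submodule.exists_eq_span_singleton_of_finrank_eq_two (hdim : Module.finrank K V = 2)
    {S : Submodule K V} (hbot : S ≠ ⊥) (htop : S ≠ ⊤) : ∃ v ≠ 0, S = K ∙ v := by
  have : FiniteDimensional K V := .of_finrank_pos (by omega)
  have hlt := Submodule.finrank_lt htop
  have hpos := Submodule.one_le_finrank_iff.2 hbot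
  exact (atom_iff_nonzero_span S).1 (isAtom_iff_finrank_eq_one.2 (by omega))

lemma span_singleton_add_smul_injective {u w : V} (hli : LinearIndependent K ![u, w]) :
    Function.Injective fun c : K ↦ K ∙ (u + c • w) := by
  intro c c' (hcc : K ∙ (u + c • w) = K ∙ (u + c' • w))
  obtain ⟨a, ha⟩ := mem_span_singleton.1 (hcc ▸ mem_span_singleton_self (u + c • w))
  obtain ⟨ha1, hac⟩ := LinearIndependent.pair_iff.1 hli (a - 1) (a * c' - c)
    (by linear_combination (norm := module) ha)
  rw [sub_eq_zero.1 ha1, one_mul] at hac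
  exact (sub_eq_zero.1 hac).symm

end LinearAlgebra

lemma LieSubalgebra.coe_lieSpan_singleton {F M : Type*} [Field F] [LieRing M] [LieAlgebra F M]
    (v : M) : (lieSpan F M {v} : Submodule F M) = F ∙ v :=
  coe_lieSpan_eq_span_of_forall_lie_eq_zero (by simp)

lemma LieSubalgebra.infinite_of_one_lt_finrank {F M : Type*} [Field F] [Infinite F] [LieRing M]
    [LieAlgebra F M] (hM : 1 < Module.finrank F M) : Infinite (LieSubalgebra F M) := by
  have : Nontrivial M := Module.nontrivial_of_finrank_pos (R := F) (by omega)
  obtain ⟨u, hu⟩ := exists_ne (0 : M)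
  obtain ⟨w, hli⟩ := exists_linearIndependent_pair_of_one_lt_finrank hM hu
  refine .of_injective (fun c : F ↦ lieSpan F M {u + c • w}) fun c c' hcc ↦ ?_
  apply span_singleton_add_smul_injective hli
  simpa only [← coe_lieSpan_singleton] using
    congrArg (fun S : LieSubalgebra F M ↦ S.toSubmodule) hcc

lemma finite_subtype_of_forall_eq_or_eq {α : Type*} {P : α → Prop} {a b c d : α}
    (h : ∀ s, P s → s ≠ a → s ≠ b → s = c ∨ s = d) : Finite {s // P s} :=
  Set.Finite.to_subtype <| (Set.toFinite {a, b, c, d}).subset fun s hs ↦ by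
    by_cases ha : s = a
    · simp [ha]
    by_cases hb : s = b
    · simp [hb]
    rcases h s hs ha hb with rfl | rfl <;> simp

section RightLeibniz

variable {K : Type*} [Field K] {L : Type*} [AddCommGroup L] [Module K L]

def IsRightLeibniz (b : L →ₗ[K] L →ₗ[K] L) : Prop :=
  ∀ x y z : L, b x (b y z) = b (b x y) z - b (b x z) y

namespace IsRightLeibniz

variable {b : L →ₗ[K] L →ₗ[K] L}

lemma apply_sq_eq_zero (hb : IsRightLeibniz b) (z x : L) : b z (b x x) = 0 := by
  rw [hb, sub_self]

lemma apply_sq_apply_eq_zero (hb : IsRightLeibniz b) (z x y : L) : b z (b (b x x) y) = 0 := by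
  rw [hb, hb.apply_sq_eq_zero, map_zero, LinearMap.zero_apply, hb.apply_sq_eq_zero, sub_zero]

lemma linearIndependent_sq (hb : IsRightLeibniz b) {x : L} (hx : b x x ≠ 0) :
    LinearIndependent K ![x, b x x] := by
  rw [LinearIndependent.pair_iff' fun h ↦ hx (by simp [h])]
  intro a ha
  have : a • b x x = 0 := by rw [← map_smul, ha, hb.apply_sq_eq_zero]
  rcases smul_eq_zero.1 this with rfl | h
  · exact hx (by rw [← ha, zero_smul])
  · exact hx h

lemma exists_sq_apply_eq_smul (hb : IsRightLeibniz b) (hdim : Module.finrank K L = 2) {x : L}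
    (hx : b x x ≠ 0) : ∃ β : K, b (b x x) x = β • b x x := by
  obtain ⟨s, t, hst⟩ :=
    exists_smul_add_smul_eq_of_finrank_eq_two hdim (hb.linearIndependent_sq hx) (b (b x x) x)
  have hs : s • b x x = 0 := by
    simpa [hb.apply_sq_eq_zero, hb.apply_sq_apply_eq_zero] using congrArg (b x) hst
  refine ⟨t, ?_⟩
  rw [← hst, (smul_eq_zero.1 hs).resolve_right hx, zero_smul, zero_add]

lemma apply_self_smul_add_smul (hb : IsRightLeibniz b) {x : L} {β : K}
    (hβ : b (b x x) x = β • b x x) (s t : K) :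
    b (s • x + t • b x x) (s • x + t • b x x) = (s * (s + t * β)) • b x x := by
  simp only [map_add, map_smul, LinearMap.add_apply, LinearMap.smul_apply, hb.apply_sq_eq_zero,
    hβ]
  module

lemma span_singleton_eq_or_eq_of_apply_self_mem (hb : IsRightLeibniz b)
    (hdim : Module.finrank K L = 2) {x : L} (hx : b x x ≠ 0) {β : K}
    (hβ : b (b x x) x = β • b x x) {v : L} (hv : v ≠ 0) (hvv : b v v ∈ K ∙ v) :
    K ∙ v = K ∙ b x x ∨ K ∙ v = K ∙ (β • x - b x x) := by
  have hli := hb.linearIndependent_sq hx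
  obtain ⟨s, t, rfl⟩ := exists_smul_add_smul_eq_of_finrank_eq_two hdim hli v
  obtain ⟨a, ha⟩ := mem_span_singleton.1 hvv
  rw [hb.apply_self_smul_add_smul hβ] at ha
  obtain ⟨has, hat⟩ := LinearIndependent.pair_iff.1 hli (a * s) (a * t - s * (s + t * β))
    (by linear_combination (norm := module) ha)
  by_cases hs : s = 0
  · left
    subst hs
    rw [zero_smul, zero_add] at hv ⊢
    have ht : t ≠ 0 := by rintro rfl; simp at hv
    exact span_singleton_smul_eq (IsUnit.mk0 t ht) _
  · right
    rw [(mul_eq_zero.1 has).resolve_right hs, zero_mul, zero_sub, neg_eq_zero,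
      mul_eq_zero] at hat
    have hs' : s = -(t * β) := eq_neg_of_add_eq_zero_left (hat.resolve_left hs)
    have ht : t ≠ 0 := by rintro rfl; simp [hs'] at hs
    rw [show s • x + t • b x x = (-t) • (β • x - b x x) by rw [hs']; module]
    exact span_singleton_smul_eq (IsUnit.mk0 _ (neg_ne_zero.2 ht)) _

lemma eq_or_eq_of_isSubalg (hb : IsRightLeibniz b) (hdim : Module.finrank K L = 2) {x : L}
    (hx : b x x ≠ 0) {β : K} (hβ : b (b x x) x = β • b x x) (S : Submodule K L)
    (hS : IsSubalg b S) (hbot : S ≠ ⊥) (htop : S ≠ ⊤) :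
    S = K ∙ b x x ∨ S = K ∙ (β • x - b x x) := by
  obtain ⟨v, hv, rfl⟩ := exists_eq_span_singleton_of_finrank_eq_two hdim hbot htop
  have hvS := mem_span_singleton_self (R := K) v
  exact hb.span_singleton_eq_or_eq_of_apply_self_mem hdim hx hβ hv (hS v hvS v hvS)

end IsRightLeibniz

end RightLeibniz

/-- A two-dimensional non-Lie right Leibniz algebra has at most two proper nonzero
subalgebras; consequently it is not lattice isomorphic (no order isomorphism of
subalgebra lattices) to a Lie algebra of dimension `> 1` over an infinite field. -/
theorem two_dim_nonLie_subalgebras {K : Type*} [Field K] {L : Type*}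
    [AddCommGroup L] [Module K L] (b : L →ₗ[K] L →ₗ[K] L)
    (hb : ∀ x y z : L, b x (b y z) = b (b x y) z - b (b x z) y)
    (hdim : Module.finrank K L = 2) (hnonLie : ∃ x : L, b x x ≠ 0) :
    (∃ S₁ S₂ : Submodule K L, ∀ S : Submodule K L,
        IsSubalg b S → S ≠ ⊥ → S ≠ ⊤ → S = S₁ ∨ S = S₂) ∧
    (∀ (F : Type) (M : Type) (_ : Field F) (_ : Infinite F) (_ : LieRing M)
        (_ : LieAlgebra F M) (_ : Module.Finite F M), 1 < Module.finrank F M →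
        IsEmpty ({S : Submodule K L // IsSubalg b S} ≃o LieSubalgebra F M)) := by
  obtain ⟨x, hx⟩ := hnonLie
  obtain ⟨β, hβ⟩ := IsRightLeibniz.exists_sq_apply_eq_smul hb hdim hx
  have hclass := IsRightLeibniz.eq_or_eq_of_isSubalg hb hdim hx hβ
  refine ⟨⟨_, _, hclass⟩, fun F M _ _ _ _ _ hM ↦ ⟨fun φ ↦ ?_⟩⟩
  have : Finite {S : Submodule K L // IsSubalg b S} := finite_subtype_of_forall_eq_or_eq hclass
  have : Infinite (LieSubalgebra F M) := LieSubalgebra.infinite_of_one_lt_finrank hM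
  have : Finite (LieSubalgebra F M) := .of_equiv _ φ.toEquiv
  exact not_finite (LieSubalgebra F M)
end

section
/- Every two-dimensional non-Lie (right) Leibniz algebra L over a field F is cyclic: there exists x in L such that L is spanned by x and x² = [x,x], and either [x²,x] = 0 or, after rescaling, [x²,x] = x². -/
/-- Every two-dimensional non-Lie right Leibniz algebra is cyclic: generated by a
single element `x` (so spanned by `x` and `x² = [x,x]`), and either `[x²,x] = 0`
or, after rescaling `x`, `[x²,x] = x²`. -/
theorem two_dim_nonLie_cyclic {K : Type*} [Field K] {L : Type*}
    [AddCommGroup L] [Module K L] (b : L →ₗ[K] L →ₗ[K] L)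
    (hb : ∀ x y z : L, b x (b y z) = b (b x y) z - b (b x z) y)
    (hdim : Module.finrank K L = 2) (hnonLie : ∃ x : L, b x x ≠ 0) :
    ∃ x : L, Submodule.span K {x, b x x} = ⊤ ∧
      (b (b x x) x = 0 ∨
        ∃ c : K, c ≠ 0 ∧ b (b (c • x) (c • x)) (c • x) = b (c • x) (c • x)) := by
  obtain ⟨x, hx⟩ := hnonLie
  set s := b x x with hs
  have hys : ∀ y, b y s = 0 := fun y => by
    have := hb y x x
    simpa [← hs, sub_self] using this
  have hxs : b x s = 0 := hys x
  have hss : b s s = 0 := hys s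
  have hli : LinearIndependent K ![x, s] := by
    rw [LinearIndependent.pair_iff]
    intro a c hac
    have h1 : a • s = 0 := by
      have := congrArg (b x) hac
      simpa [map_add, map_smul, hxs] using this
    have ha : a = 0 := by
      rcases smul_eq_zero.mp h1 with h | h
      · exact h
      · exact absurd h hx
    refine ⟨ha, ?_⟩
    rw [ha, zero_smul, zero_add] at hac
    rcases smul_eq_zero.mp hac with h | h
    · exact h
    · exact absurd h hx
  haveI : FiniteDimensional K L := FiniteDimensional.of_finrank_eq_succ (n := 1) hdim
  have hspan : Submodule.span K {x, s} = ⊤ := by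
    have hr : Set.range ![x, s] = {x, s} := by
      rw [Matrix.range_cons, Matrix.range_cons, Matrix.range_empty, Set.union_empty, Set.union_comm, Set.union_singleton]
    have hf : Module.finrank K (Submodule.span K (Set.range ![x, s])) = 2 := by
      exact (finrank_span_eq_card hli).trans (Fintype.card_fin 2)
    apply Submodule.eq_top_of_finrank_eq
    rw [← hr, hf, hdim]
  refine ⟨x, hspan, ?_⟩
  have hmem : b s x ∈ Submodule.span K {x, s} := hspan ▸ Submodule.mem_top
  obtain ⟨a, β, hab⟩ := Submodule.mem_span_pair.mp hmem
  have hbsx0 : b x (b s x) = 0 := by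
    have := hb x s x
    simpa [← hs, hxs, hss] using this
  have ha0 : a = 0 := by
    have h1 : a • s = 0 := by
      have := congrArg (b x) hab
      rw [hbsx0] at this
      simpa [map_add, map_smul, hxs] using this
    rcases smul_eq_zero.mp h1 with h | h
    · exact h
    · exact absurd h hx
  have hsx : b s x = β • s := by rw [← hab, ha0, zero_smul, zero_add]
  by_cases hβ : β = 0
  · left
    rw [← hs, hsx, hβ, zero_smul]
  · right
    refine ⟨β⁻¹, inv_ne_zero hβ, ?_⟩
    simp only [map_smul, LinearMap.smul_apply, ← hs, hsx, smul_smul]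
    congr 1
    field_simp
end

section
/- Let L = A ⊕ Fx (vector space direct sum) be a non-Lie (right) Leibniz algebra in which A is a minimal abelian ideal of L and [x,x] = 0. Then L is generated by the single element x + a for any nonzero a in A, and A equals the Leibniz kernel I of L. -/
/-- The subalgebra generated by an element. -/
def gen {K : Type*} [Field K] {L : Type*} [AddCommGroup L] [Module K L]
    (b : L →ₗ[K] L →ₗ[K] L) (x : L) : Submodule K L :=
  sInf {S : Submodule K L | IsSubalg b S ∧ x ∈ S}

/-- Let `L = A ∔ Fx` be a non-Lie right Leibniz algebra with `A` a minimal abelian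
ideal and `x² = 0`. Then `L` is generated by `x + a` for any nonzero `a ∈ A`,
and `A` equals the Leibniz kernel `I`. -/
theorem minimal_abelian_ideal_cyclic {K : Type*} [Field K] {L : Type*}
    [AddCommGroup L] [Module K L] (b : L →ₗ[K] L →ₗ[K] L)
    (hb : ∀ x y z : L, b x (b y z) = b (b x y) z - b (b x z) y)
    (A : Submodule K L) (x : L)
    (hcompl : A ⊓ Submodule.span K {x} = ⊥ ∧ A ⊔ Submodule.span K {x} = ⊤)
    (hx2 : b x x = 0)
    (hA0 : A ≠ ⊥) (hAab : ∀ a ∈ A, ∀ a' ∈ A, b a a' = 0)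
    (hAideal : ∀ a ∈ A, ∀ y : L, b a y ∈ A ∧ b y a ∈ A)
    (hmin : ∀ B : Submodule K L, B ≤ A → (∀ c ∈ B, ∀ y : L, b c y ∈ B ∧ b y c ∈ B) →
      B = ⊥ ∨ B = A)
    (hnonLie : ∃ y : L, b y y ≠ 0) :
    (∀ a ∈ A, a ≠ 0 → gen b (x + a) = ⊤) ∧
      A = Submodule.span K {w : L | ∃ y : L, w = b y y} := by
  -- decomposition of an arbitrary element
  have decomp : ∀ y : L, ∃ a' ∈ A, ∃ c : K, y = a' + c • x := by
    intro y
    have hy : y ∈ A ⊔ Submodule.span K {x} := hcompl.2 ▸ Submodule.mem_top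
    obtain ⟨a', ha', m, hm, rfl⟩ := Submodule.mem_sup.mp hy
    obtain ⟨c, rfl⟩ := Submodule.mem_span_singleton.mp hm
    exact ⟨a', ha', c, rfl⟩
  set I : Submodule K L := Submodule.span K {w : L | ∃ y : L, w = b y y} with hI
  have sq_mem : ∀ y : L, b y y ∈ I := fun y => Submodule.subset_span ⟨y, rfl⟩
  have sum_mem_I : ∀ u v : L, b u v + b v u ∈ I := by
    intro u v
    have h : b u v + b v u = b (u + v) (u + v) - b u u - b v v := by
      simp [map_add]; abel
    rw [h]
    exact sub_mem (sub_mem (sq_mem _) (sq_mem _)) (sq_mem _)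
  have sq_bracket_mem : ∀ u y : L, b (b u u) y ∈ I := by
    intro u y
    have h : b (b u u) y = b u (b u y) + b (b u y) u := by
      rw [hb u u y]; abel
    rw [h]; exact sum_mem_I _ _
  have I_left : ∀ c ∈ I, ∀ y : L, b c y ∈ I := by
    intro c hc y
    refine Submodule.span_induction ?_ ?_ ?_ ?_ hc
    · rintro w ⟨u, rfl⟩; exact sq_bracket_mem u y
    · simp
    · intro u v _ _ hu hv; rw [map_add]; exact add_mem hu hv
    · intro t u _ hu; rw [map_smul]; exact Submodule.smul_mem _ _ hu
  have I_right : ∀ c ∈ I, ∀ y : L, b y c = 0 := by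
    intro c hc y
    refine Submodule.span_induction ?_ ?_ ?_ ?_ hc
    · rintro w ⟨u, rfl⟩
      rw [hb y u u]; abel
    · simp
    · intro u v _ _ hu hv; rw [map_add, hu, hv, add_zero]
    · intro t u _ hu; rw [map_smul, hu, smul_zero]
  -- each square lies in A
  have sq_in_A : ∀ y : L, b y y ∈ A := by
    intro y
    obtain ⟨a', ha', c, rfl⟩ := decomp y
    have h : b (a' + c • x) (a' + c • x)
        = b a' a' + c • b a' x + c • b x a' + (c * c) • b x x := by
      simp [map_add, map_smul, smul_smul]; abel
    rw [h, hAab a' ha' a' ha', hx2, smul_zero, zero_add, add_zero]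
    exact add_mem (Submodule.smul_mem _ _ (hAideal a' ha' x).1)
      (Submodule.smul_mem _ _ (hAideal a' ha' x).2)
  have hIA : I ≤ A := by
    rw [hI, Submodule.span_le]
    rintro w ⟨y, rfl⟩; exact sq_in_A y
  have hIne : I ≠ ⊥ := by
    obtain ⟨y, hy⟩ := hnonLie
    intro h
    exact hy ((Submodule.eq_bot_iff I).mp h _ (sq_mem y))
  have hIeqA : I = A := by
    rcases hmin I hIA (fun c hc y => ⟨I_left c hc y, (I_right c hc y) ▸ zero_mem I⟩) with h | h
    · exact absurd h hIne
    · exact h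
  -- the derivation D
  set D : L →ₗ[K] L := b x + b.flip x with hD
  have hDapp : ∀ c : L, D c = b x c + b c x := fun c => rfl
  have hDx : ∀ c : L, D (b x c) = 0 := by
    intro c
    have h := hb x x c
    rw [hx2, map_zero, LinearMap.zero_apply] at h
    rw [hDapp, h]; abel
  have hDcx : ∀ c : L, D c = 0 → D (b c x) = 0 := by
    intro c hc
    have h := hb x c x
    rw [hx2, map_zero, LinearMap.zero_apply, sub_zero] at h
    have h3 : b (b x c + b c x) x = 0 := by
      rw [show b x c + b c x = D c from (hDapp c).symm, hc, map_zero,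
        LinearMap.zero_apply]
    rw [map_add, LinearMap.add_apply] at h3
    rw [hDapp, h]
    exact h3
  -- A ⊓ ker D is an ideal, and it is ⊥
  have hidK : ∀ c ∈ A ⊓ LinearMap.ker D, ∀ y : L,
      b c y ∈ A ⊓ LinearMap.ker D ∧ b y c ∈ A ⊓ LinearMap.ker D := by
    rintro c ⟨hcA, hcD⟩ y
    obtain ⟨a', ha', lam, rfl⟩ := decomp y
    have hcD' : D c = 0 := hcD
    constructor
    · have h1 : b c (a' + lam • x) = lam • b c x := by
        rw [map_add, map_smul, hAab c hcA a' ha', zero_add]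
      rw [h1]
      exact Submodule.smul_mem _ _ ⟨(hAideal c hcA x).1,
        LinearMap.mem_ker.mpr (hDcx c hcD')⟩
    · have h1 : b (a' + lam • x) c = lam • b x c := by
        rw [map_add, LinearMap.add_apply, map_smul, LinearMap.smul_apply,
          hAab a' ha' c hcA, zero_add]
      rw [h1]
      exact Submodule.smul_mem _ _ ⟨(hAideal c hcA x).2,
        LinearMap.mem_ker.mpr (hDx c)⟩
  have hkerbot : A ⊓ LinearMap.ker D = ⊥ := by
    rcases hmin (A ⊓ LinearMap.ker D) inf_le_left hidK with h | h
    · exact h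
    · exfalso
      obtain ⟨y, hy⟩ := hnonLie
      apply hy
      obtain ⟨a', ha', c, rfl⟩ := decomp y
      have hDa : D a' = 0 := by
        have h2 : a' ∈ A ⊓ LinearMap.ker D := by rw [h]; exact ha'
        exact h2.2
      have hq : b (a' + c • x) (a' + c • x) = c • D a' := by
        rw [hDapp]
        simp only [map_add, map_smul, LinearMap.add_apply, LinearMap.smul_apply,
          hAab a' ha' a' ha', hx2, smul_zero, smul_add, add_zero, zero_add]
        try abel
      rw [hq, hDa, smul_zero]
  constructor
  · -- generation
    intro a haA ha0
    set z : L := x + a with hz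
    set S : Submodule K L := gen b z with hS
    have hzS : z ∈ S := by
      rw [hS, gen]
      exact Submodule.mem_sInf.mpr fun S' hS' => hS'.2
    have hSalg : ∀ u ∈ S, ∀ v ∈ S, b u v ∈ S := by
      intro u hu v hv
      rw [hS, gen] at *
      exact Submodule.mem_sInf.mpr fun S' hS' =>
        hS'.1 u (Submodule.mem_sInf.mp hu S' hS') v (Submodule.mem_sInf.mp hv S' hS')
    have hqA : b z z = D a := by
      have h1 : b (x + a) (x + a) = b x a + b a x := by
        simp only [map_add, LinearMap.add_apply, hx2, hAab a haA a haA,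
          zero_add, add_zero]
        try abel
      rw [hz, h1, hDapp]
    -- S ⊓ A is an ideal
    have hideal : ∀ c ∈ S ⊓ A, ∀ y : L, b c y ∈ S ⊓ A ∧ b y c ∈ S ⊓ A := by
      rintro c ⟨hcS, hcA⟩ y
      obtain ⟨a', ha', lam, rfl⟩ := decomp y
      have hcx : b c x = b c z := by
        rw [hz, map_add, hAab c hcA a haA, add_zero]
      have hxc : b x c = b z c := by
        rw [hz, map_add, LinearMap.add_apply, hAab a haA c hcA, add_zero]
      constructor
      · have h1 : b c (a' + lam • x) = lam • b c x := by
          rw [map_add, map_smul, hAab c hcA a' ha', zero_add]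
        rw [h1]
        exact Submodule.smul_mem _ _ ⟨hcx ▸ hSalg c hcS z hzS, (hAideal c hcA x).1⟩
      · have h1 : b (a' + lam • x) c = lam • b x c := by
          rw [map_add, LinearMap.add_apply, map_smul, LinearMap.smul_apply,
            hAab a' ha' c hcA, zero_add]
        rw [h1]
        exact Submodule.smul_mem _ _ ⟨hxc ▸ hSalg z hzS c hcS, (hAideal c hcA x).2⟩
    rcases hmin (S ⊓ A) inf_le_right hideal with h | h
    · exfalso
      have hq : b z z ∈ S ⊓ A := ⟨hSalg z hzS z hzS, sq_in_A z⟩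
      rw [h, Submodule.mem_bot] at hq
      have haker : a ∈ A ⊓ LinearMap.ker D :=
        ⟨haA, LinearMap.mem_ker.mpr (by rw [← hqA, hq])⟩
      rw [hkerbot, Submodule.mem_bot] at haker
      exact ha0 haker
    · -- A ≤ S, so S = ⊤
      have hAS : A ≤ S := by
        intro c hc
        have h2 : c ∈ S ⊓ A := by rw [h]; exact hc
        exact h2.1
      have hxS : x ∈ S := by
        have : z - a ∈ S := sub_mem hzS (hAS haA)
        simpa [hz] using this
      rw [eq_top_iff, ← hcompl.2]
      exact sup_le hAS ((Submodule.span_singleton_le_iff_mem x S).mpr hxS)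
  · exact hIeqA.symm
end

section
/- Let L be a cyclic (right) Leibniz algebra of dimension n > 1 generated by x. Then x, x², ..., xⁿ (where x^{i+1} = [x^i, x]) form a basis of L, the subalgebra spanned by x², ..., xⁿ equals the Leibniz kernel I, and I is abelian with [L, I] = 0. -/
/-- Right powers: `pw b x k = x^{k+1}`, i.e. `pw b x 0 = x`,
`pw b x (k+1) = [x^{k+1}, x]`. -/
def pw {K : Type*} [Field K] {L : Type*} [AddCommGroup L] [Module K L]
    (b : L →ₗ[K] L →ₗ[K] L) (x : L) : ℕ → L
  | 0 => x
  | k + 1 => b (pw b x k) x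

section Aux

variable {K : Type*} [Field K] {L : Type*} [AddCommGroup L] [Module K L]
variable {b : L →ₗ[K] L →ₗ[K] L}

lemma leib_sq_zero (hb : ∀ x y z : L, b x (b y z) = b (b x y) z - b (b x z) y)
    (y z : L) : b y (b z z) = 0 := by
  rw [hb]; exact sub_self _

/-- `[L, I] = 0`. -/
lemma leib_left_ann (hb : ∀ x y z : L, b x (b y z) = b (b x y) z - b (b x z) y)
    (y : L) : ∀ z ∈ Submodule.span K {w : L | ∃ u : L, w = b u u}, b y z = 0 := by
  intro z hz
  induction hz using Submodule.span_induction with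
  | mem w hw => obtain ⟨u, rfl⟩ := hw; exact leib_sq_zero hb y u
  | zero => simp
  | add a c _ _ ha hc => simp [ha, hc]
  | smul r a _ ha => simp [ha]

/-- `[I, L] ⊆ I`. -/
lemma leib_bracket_mem (hb : ∀ x y z : L, b x (b y z) = b (b x y) z - b (b x z) y)
    (w : L) (hw : w ∈ Submodule.span K {w : L | ∃ u : L, w = b u u}) (z : L) :
    b w z ∈ Submodule.span K {w : L | ∃ u : L, w = b u u} := by
  have h0 : b z w = 0 := leib_left_ann hb z w hw
  have e : b (w + z) (w + z) = b w w + b w z + b z w + b z z := by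
    simp only [map_add, LinearMap.add_apply]; abel
  have key : b w z = b (w + z) (w + z) - b w w - b z z := by rw [e, h0]; abel
  rw [key]
  exact sub_mem (sub_mem (Submodule.subset_span ⟨w + z, rfl⟩)
    (Submodule.subset_span ⟨w, rfl⟩)) (Submodule.subset_span ⟨z, rfl⟩)

lemma pw_mem_I (hb : ∀ x y z : L, b x (b y z) = b (b x y) z - b (b x z) y)
    (x : L) : ∀ k, pw b x (k + 1) ∈ Submodule.span K {w : L | ∃ u : L, w = b u u} := by
  intro k
  induction k with
  | zero => exact Submodule.subset_span ⟨x, rfl⟩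
  | succ k ih => exact leib_bracket_mem hb _ ih x

end Aux

set_option maxHeartbeats 1000000 in
/-- In a cyclic right Leibniz algebra of dimension `n > 1` generated by `x`, the
elements `x, x², …, xⁿ` form a basis, the span of `x², …, xⁿ` is the Leibniz
kernel `I`, and `I` is abelian with `[L, I] = 0`. -/
theorem cyclic_structure {K : Type*} [Field K] {L : Type*}
    [AddCommGroup L] [Module K L] [FiniteDimensional K L]
    (b : L →ₗ[K] L →ₗ[K] L)
    (hb : ∀ x y z : L, b x (b y z) = b (b x y) z - b (b x z) y)
    (n : ℕ) (hn : 1 < n) (hdim : Module.finrank K L = n)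
    (x : L) (hgen : gen b x = ⊤) :
    (LinearIndependent K (fun i : Fin n => pw b x i) ∧
      Submodule.span K (Set.range (fun i : Fin n => pw b x i)) = ⊤) ∧
    Submodule.span K (Set.range (fun i : Fin (n - 1) => pw b x (i + 1))) =
      Submodule.span K {w : L | ∃ y : L, w = b y y} ∧
    (∀ y : L, ∀ z ∈ Submodule.span K {w : L | ∃ y : L, w = b y y}, b y z = 0) ∧
    (∀ z ∈ Submodule.span K {w : L | ∃ y : L, w = b y y},
      ∀ z' ∈ Submodule.span K {w : L | ∃ y : L, w = b y y}, b z z' = 0) := by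
  classical
  have hB : ∀ y : L, ∀ z ∈ Submodule.span K {w : L | ∃ u : L, w = b u u}, b y z = 0 :=
    fun y => leib_left_ann hb y
  have hD : ∀ k, pw b x (k + 1) ∈ Submodule.span K {w : L | ∃ u : L, w = b u u} :=
    pw_mem_I hb x
  -- the span of all powers is the whole algebra
  have hS : Submodule.span K (Set.range (pw b x)) = ⊤ := by
    have hgx : ∀ w ∈ Submodule.span K (Set.range (pw b x)),
        b w x ∈ Submodule.span K (Set.range (pw b x)) := by
      intro w hw
      induction hw using Submodule.span_induction with
      | mem w hw => obtain ⟨j, rfl⟩ := hw; exact Submodule.subset_span ⟨j + 1, rfl⟩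
      | zero => simp
      | add a c _ _ ha hc => rw [map_add, LinearMap.add_apply]; exact add_mem ha hc
      | smul r a _ ha => rw [map_smul, LinearMap.smul_apply]; exact Submodule.smul_mem _ _ ha
    have hsub : IsSubalg b (Submodule.span K (Set.range (pw b x))) := by
      intro w hw v hv
      induction hv using Submodule.span_induction with
      | mem v hv =>
        obtain ⟨k, rfl⟩ := hv
        cases k with
        | zero => exact hgx w hw
        | succ k => rw [hB w _ (hD k)]; exact zero_mem _
      | zero => simp
      | add a c _ _ ha hc => rw [map_add]; exact add_mem ha hc
      | smul r a _ ha => rw [map_smul]; exact Submodule.smul_mem _ _ ha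
    refine top_unique ?_
    rw [← hgen]
    exact sInf_le ⟨hsub, Submodule.subset_span ⟨0, rfl⟩⟩
  -- the key predicate
  set Q : ℕ → Prop :=
    fun k => pw b x k ∈ Submodule.span K (Set.range (fun i : Fin k => pw b x i)) with hQdef
  have hF : ∀ m, (∀ k < m, ¬ Q k) → LinearIndependent K (fun i : Fin m => pw b x i) := by
    intro m
    induction m with
    | zero => intro _; exact linearIndependent_empty_type
    | succ m ih =>
      intro h
      have hsnoc : (fun i : Fin (m + 1) => pw b x i)
          = Fin.snoc (fun i : Fin m => pw b x i) (pw b x m) := by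
        funext i
        refine Fin.lastCases ?_ ?_ i
        · simp
        · intro j; simp
      rw [hsnoc]
      exact linearIndependent_fin_snoc.mpr
        ⟨ih (fun k hk => h k (hk.trans (Nat.lt_succ_self m))), h m (Nat.lt_succ_self m)⟩
  have hE : ∀ m, Q m →
      Submodule.span K (Set.range (fun i : Fin m => pw b x i)) = ⊤ := by
    intro m hQ
    have hstep : ∀ w ∈ Submodule.span K (Set.range (fun i : Fin m => pw b x i)),
        b w x ∈ Submodule.span K (Set.range (fun i : Fin m => pw b x i)) := by
      intro w hw
      induction hw using Submodule.span_induction with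
      | mem w hw =>
        obtain ⟨i, rfl⟩ := hw
        show pw b x ((i : ℕ) + 1) ∈ _
        rcases lt_or_eq_of_le (Nat.succ_le_of_lt i.isLt) with h | h
        · exact Submodule.subset_span ⟨⟨(i : ℕ) + 1, h⟩, rfl⟩
        · have h' : (i : ℕ) + 1 = m := h
          rw [h']; exact hQ
      | zero => simp
      | add a c _ _ ha hc => rw [map_add, LinearMap.add_apply]; exact add_mem ha hc
      | smul r a _ ha => rw [map_smul, LinearMap.smul_apply]; exact Submodule.smul_mem _ _ ha
    have hall : ∀ j, pw b x j ∈ Submodule.span K (Set.range (fun i : Fin m => pw b x i)) := by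
      intro j
      induction j with
      | zero =>
        cases m with
        | zero => exact hQ
        | succ m' => exact Submodule.subset_span ⟨⟨0, Nat.succ_pos _⟩, rfl⟩
      | succ j ihj => exact hstep _ ihj
    refine top_unique ?_
    rw [← hS, Submodule.span_le]
    rintro v ⟨j, rfl⟩
    exact hall j
  have hex : ∃ k, Q k := by
    by_contra h
    push_neg at h
    have hli := hF (n + 1) (fun k _ => h k)
    have hcard := hli.fintype_card_le_finrank
    rw [hdim, Fintype.card_fin] at hcard
    omega
  have hQm : Q (Nat.find hex) := Nat.find_spec hex
  have hmin : ∀ k < Nat.find hex, ¬ Q k := fun k hk => Nat.find_min hex hk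
  have hindm := hF (Nat.find hex) hmin
  have hspanm := hE (Nat.find hex) hQm
  have h1 : Nat.find hex ≤ n := by
    have := hindm.fintype_card_le_finrank
    rwa [hdim, Fintype.card_fin] at this
  have h2 : n ≤ Nat.find hex := by
    have := finrank_le_of_span_eq_top hspanm
    rwa [hdim, Fintype.card_fin] at this
  have hmn : Nat.find hex = n := le_antisymm h1 h2
  rw [hmn] at hindm hspanm hQm
  -- conjunct 2
  have hJI : Submodule.span K (Set.range (fun i : Fin (n - 1) => pw b x (i + 1)))
      ≤ Submodule.span K {w : L | ∃ u : L, w = b u u} := by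
    rw [Submodule.span_le]; rintro v ⟨i, rfl⟩; exact hD i
  have hdec : ∀ y : L, ∃ c : K, ∃ w ∈ Submodule.span K
      (Set.range (fun i : Fin (n - 1) => pw b x (i + 1))), y = c • x + w := by
    intro y
    have hle : Submodule.span K (Set.range (fun i : Fin n => pw b x i)) ≤
        Submodule.span K {x} ⊔
          Submodule.span K (Set.range (fun i : Fin (n - 1) => pw b x (i + 1))) := by
      rw [Submodule.span_le]
      rintro v ⟨i, rfl⟩
      obtain ⟨iv, hiv⟩ := i
      cases iv with
      | zero => exact Submodule.mem_sup_left (Submodule.subset_span rfl)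
      | succ k =>
        exact Submodule.mem_sup_right (Submodule.subset_span ⟨⟨k, by omega⟩, rfl⟩)
    have hy : y ∈ Submodule.span K {x} ⊔
        Submodule.span K (Set.range (fun i : Fin (n - 1) => pw b x (i + 1))) := by
      apply hle; rw [hspanm]; trivial
    rcases Submodule.mem_sup.mp hy with ⟨u, hu, w, hw, huw⟩
    rcases Submodule.mem_span_singleton.mp hu with ⟨c, rfl⟩
    exact ⟨c, w, hw, huw.symm⟩
  have pw1ne : pw b x 1 ≠ 0 := by
    have := hindm.ne_zero ⟨1, hn⟩
    simpa using this
  have pw1J : pw b x 1 ∈ Submodule.span K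
      (Set.range (fun i : Fin (n - 1) => pw b x (i + 1))) :=
    Submodule.subset_span ⟨⟨0, by omega⟩, rfl⟩
  have hpwn : pw b x n ∈ Submodule.span K
      (Set.range (fun i : Fin (n - 1) => pw b x (i + 1))) := by
    obtain ⟨c, w, hw, hdecn⟩ := hdec (pw b x n)
    have hnI : pw b x n ∈ Submodule.span K {w : L | ∃ u : L, w = b u u} := by
      have := hD (n - 1)
      rwa [Nat.sub_add_cancel (show 1 ≤ n by omega)] at this
    have h0 : b x (pw b x n) = 0 := hB x _ hnI
    have h0' : b x w = 0 := hB x w (hJI hw)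
    have hc0 : c • pw b x 1 = 0 := by
      have e : b x (pw b x n) = c • b x x + b x w := by
        rw [hdecn, map_add, map_smul]
      rw [h0, h0'] at e
      have : (0 : L) = c • pw b x 1 + 0 := e
      rw [add_zero] at this
      exact this.symm
    rcases smul_eq_zero.mp hc0 with hc | hpw
    · rw [hdecn, hc, zero_smul, zero_add]; exact hw
    · exact absurd hpw pw1ne
  have hJstep : ∀ w ∈ Submodule.span K
      (Set.range (fun i : Fin (n - 1) => pw b x (i + 1))),
      b w x ∈ Submodule.span K (Set.range (fun i : Fin (n - 1) => pw b x (i + 1))) := by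
    intro w hw
    induction hw using Submodule.span_induction with
    | mem w hw =>
      obtain ⟨i, rfl⟩ := hw
      show pw b x ((i : ℕ) + 1 + 1) ∈ _
      rcases lt_or_eq_of_le (Nat.succ_le_of_lt i.isLt) with h | h
      · exact Submodule.subset_span ⟨⟨(i : ℕ) + 1, h⟩, rfl⟩
      · have h' : (i : ℕ) + 1 = n - 1 := h
        rw [h', Nat.sub_add_cancel (show 1 ≤ n by omega)]; exact hpwn
    | zero => simp
    | add a c _ _ ha hc => rw [map_add, LinearMap.add_apply]; exact add_mem ha hc
    | smul r a _ ha => rw [map_smul, LinearMap.smul_apply]; exact Submodule.smul_mem _ _ ha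
  have hIJ : Submodule.span K {w : L | ∃ u : L, w = b u u}
      ≤ Submodule.span K (Set.range (fun i : Fin (n - 1) => pw b x (i + 1))) := by
    rw [Submodule.span_le]
    rintro v ⟨y, rfl⟩
    obtain ⟨c, w, hw, rfl⟩ := hdec y
    have hxw : b x w = 0 := hB x w (hJI hw)
    have hww : b w w = 0 := hB w w (hJI hw)
    have e : b (c • x + w) (c • x + w) = (c * c) • pw b x 1 + c • b w x := by
      have h1 : pw b x 1 = b x x := rfl
      simp only [h1, map_add, map_smul, LinearMap.add_apply, LinearMap.smul_apply, hxw, hww,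
        smul_zero, add_zero, zero_add, smul_add, smul_smul]
      try module
    rw [SetLike.mem_coe, e]
    exact add_mem (Submodule.smul_mem _ _ pw1J) (Submodule.smul_mem _ _ (hJstep w hw))
  exact ⟨⟨hindm, hspanm⟩, le_antisymm (by exact hJI) hIJ,
    hB, fun z _ z' hz' => hB z z' hz'⟩
end

section
/- Let S be a three-dimensional non-split simple Lie algebra over a field F of characteristic zero, and let R be a finite-dimensional irreducible S-module. Then for any s ∈ S, the module R has an ad s-invariant (i.e., invariant under the action of s) subspace of dimension at most two. -/
/-!
For `s ≠ 0` the non-split hypothesis forces `ker (ad s) = F s` and yields `u, w` with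
`⁅s, u⁆ = w`, `⁅s, w⁆ = a • u`, `⁅u, w⁆ = γ • s` and `a γ ≠ 0`. Over an algebraic closure,
with `α ^ 2 = a`, the elements `(2 / α) • s`, `α • u + w`, `(a * γ)⁻¹ • (w - α • u)` form an
`sl₂`-triple, so every eigenvalue of `s` on `F̄ ⊗ R` is `n * α / 2` with `n ∈ ℤ`, and its square
`n ^ 2 * a / 4` lies in `F`. Hence `s ^ 2` has an eigenvector `v` in `R`, and `v`, `⁅s, v⁆` span
an `s`-invariant subspace.
-/

open Module LieModule TensorProduct

namespace IsSl2Triple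

variable {K L M : Type*} [Field K] [CharZero K] [LieRing L] [LieAlgebra K L]
  [AddCommGroup M] [Module K M] [LieRingModule L M] [LieModule K L M]

lemma exists_int_eq_of_lie_eq_smul [FiniteDimensional K M] {h e f : L} (t : IsSl2Triple h e f)
    {m : M} {μ : K} (hm₀ : m ≠ 0) (hm : ⁅h, m⁆ = μ • m) : ∃ n : ℤ, μ = n := by
  have hvanish : ∃ k, ((toEnd K L M e) ^ k) m = 0 := by
    -- otherwise `h` would have the infinitely many eigenvalues `μ + 2 * k`
    by_contra! hne
    refine Set.infinite_range_of_injective (f := fun k : ℕ ↦ μ + 2 * k) (fun a b hab ↦ ?_)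
      ((toEnd K L M h).finite_hasEigenvalue.subset ?_)
    · simpa using hab
    · rintro _ ⟨k, rfl⟩
      exact Module.End.hasEigenvalue_of_hasEigenvector
        ⟨Module.End.mem_eigenspace_iff.mpr (t.lie_h_pow_toEnd_e hm k), hne k⟩
  obtain ⟨k, hk₀, hk⟩ :=
    Nat.exists_not_and_succ_of_not_zero_of_exists (by simpa using hm₀) hvanish
  have P : t.HasPrimitiveVectorWith (((toEnd K L M e) ^ k) m) (μ + 2 * k) :=
    ⟨hk₀, t.lie_h_pow_toEnd_e hm k, by rwa [lie_e_pow_toEnd_e]⟩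
  obtain ⟨n, hn⟩ := P.exists_nat
  exact ⟨n - 2 * k, by push_cast; linear_combination hn⟩

lemma of_lie_eq_smul {x y z : L} {α γ : K} (hα : α ≠ 0) (hγ : γ ≠ 0) (hx : x ≠ 0)
    (hxy : ⁅x, y⁆ = z) (hxz : ⁅x, z⁆ = α ^ 2 • y) (hyz : ⁅y, z⁆ = γ • x) :
    IsSl2Triple ((2 / α) • x) (α • y + z) ((α ^ 2 * γ)⁻¹ • (z - α • y)) where
  h_ne_zero := smul_ne_zero (by simpa using hα) hx
  lie_e_f := by
    simp only [lie_smul, smul_lie, add_lie, lie_sub, lie_self, hyz, ← lie_skew z y]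
    match_scalars
    field_simp
    ring
  lie_h_e_nsmul := by
    simp only [lie_smul, smul_lie, lie_add, hxy, hxz]
    match_scalars <;> field_simp
  lie_h_f_nsmul := by
    simp only [lie_smul, smul_lie, lie_sub, hxy, hxz]
    match_scalars <;> field_simp

end IsSl2Triple

namespace LieModule

variable {K L M : Type*} [Field K] [CharZero K] [LieRing L] [LieAlgebra K L]
  [AddCommGroup M] [Module K M] [LieRingModule L M] [LieModule K L M]

lemma exists_int_two_mul_eq_of_lie_eq_smul [FiniteDimensional K M] {x y z : L} {α γ : K}
    (hα : α ≠ 0) (hγ : γ ≠ 0)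
    (hxy : ⁅x, y⁆ = z) (hxz : ⁅x, z⁆ = α ^ 2 • y) (hyz : ⁅y, z⁆ = γ • x) {m : M} {μ : K}
    (hm₀ : m ≠ 0) (hm : ⁅x, m⁆ = μ • m) : ∃ n : ℤ, 2 * μ = n * α := by
  rcases eq_or_ne x 0 with rfl | hx
  · refine ⟨0, ?_⟩
    simpa [hm₀, eq_comm (a := (0 : M))] using hm
  · obtain ⟨n, hn⟩ := (IsSl2Triple.of_lie_eq_smul hα hγ hx hxy hxz hyz).exists_int_eq_of_lie_eq_smul
      hm₀ (μ := 2 / α * μ) (by rw [smul_lie, hm, smul_smul])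
    exact ⟨n, by field_simp at hn; linear_combination hn⟩

end LieModule

lemma Module.End.hasEigenvalue_of_baseChange {F K V : Type*} [Field F] [Field K] [Algebra F K]
    [AddCommGroup V] [Module F V] [FiniteDimensional F V] (f : Module.End F V) {c : F}
    (h : Module.End.HasEigenvalue (f.baseChange K) (algebraMap F K c)) : f.HasEigenvalue c := by
  rw [hasEigenvalue_iff_isRoot_charpoly] at h ⊢
  rwa [LinearMap.charpoly_baseChange, Polynomial.isRoot_map_iff (algebraMap F K).injective] at h

lemma Module.End.exists_invariant_finrank_le_two {F V : Type*} [Field F] [AddCommGroup V]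
    [Module F V] (f : Module.End F V) {c : F} (hc : (f ^ 2).HasEigenvalue c) :
    ∃ U : Submodule F V, U ≠ ⊥ ∧ finrank F U ≤ 2 ∧ ∀ u ∈ U, f u ∈ U := by
  classical
  obtain ⟨v, hv⟩ := hc.exists_hasEigenvector
  have hffv : f (f v) = c • v := by rw [← Module.End.mul_apply, ← pow_two, hv.apply_eq_smul]
  refine ⟨Submodule.span F {v, f v}, ?_, ?_, fun u hu ↦ ?_⟩
  · exact (Submodule.ne_bot_iff _).mpr ⟨v, Submodule.subset_span (by simp), hv.2⟩
  · have := (finrank_span_finset_le_card (R := F) {v, f v}).trans Finset.card_le_two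
    rwa [Finset.coe_insert, Finset.coe_singleton] at this
  · have hle : Submodule.span F {v, f v} ≤ (Submodule.span F {v, f v}).comap f := by
      rw [Submodule.span_le, Set.insert_subset_iff, Set.singleton_subset_iff]
      refine ⟨Submodule.subset_span (by simp), ?_⟩
      rw [SetLike.mem_coe, Submodule.mem_comap, hffv]
      exact Submodule.smul_mem _ c (Submodule.subset_span (by simp))
    exact hle hu

section

attribute [local instance] LieRing.ofAssociativeRing

lemma LieModule.exists_hasEigenvalue_toEnd_sq {F L M : Type*} [Field F] [CharZero F]
    [LieRing L] [LieAlgebra F L] [AddCommGroup M] [Module F M] [LieRingModule L M]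
    [LieModule F L M] [FiniteDimensional F M] [Nontrivial M]
    {x y z : L} {a γ : F} (ha : a ≠ 0) (hγ : γ ≠ 0)
    (hxy : ⁅x, y⁆ = z) (hxz : ⁅x, z⁆ = a • y) (hyz : ⁅y, z⁆ = γ • x) :
    ∃ c : F, (toEnd F L M x ^ 2).HasEigenvalue c := by
  let K := AlgebraicClosure F
  let ρ : L →ₗ⁅F⁆ Module.End K (K ⊗[F] M) :=
    (Module.End.baseChangeHom F K M).toLieHom.comp (toEnd F L M)
  have hρ (c : F) (v : L) : ρ (c • v) = algebraMap F K c • ρ v := by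
    rw [algebraMap_smul, map_smul]
  obtain ⟨α, hα⟩ := IsAlgClosed.exists_pow_nat_eq (algebraMap F K a) two_pos
  have hα₀ : α ≠ 0 := by
    rintro rfl
    exact ha ((algebraMap F K).injective (by simpa using hα.symm))
  obtain ⟨μ, hμ⟩ := Module.End.exists_eigenvalue (ρ x)
  obtain ⟨m, hm⟩ := hμ.exists_hasEigenvector
  obtain ⟨n, hn⟩ := exists_int_two_mul_eq_of_lie_eq_smul (x := ρ x) (y := ρ y) (z := ρ z)
    (γ := algebraMap F K γ) hα₀ (by simpa using hγ)
    (by rw [← LieHom.map_lie, hxy]) (by rw [← LieHom.map_lie, hxz, hρ, hα])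
    (by rw [← LieHom.map_lie, hyz, hρ]) hm.2 hm.apply_eq_smul
  refine ⟨n ^ 2 * a / 4, (toEnd F L M x ^ 2).hasEigenvalue_of_baseChange (K := K) ?_⟩
  have hμ2 : μ ^ 2 = algebraMap F K (n ^ 2 * a / 4) := by
    simp only [map_div₀, map_mul, map_pow, map_intCast, map_ofNat, ← hα]
    linear_combination (2 * μ + n * α) * hn / 4
  rw [LinearMap.baseChange_pow, ← hμ2]
  exact hμ.pow 2

end

def LieAlgebra.NonSplit (F S : Type*) [CommRing F] [LieRing S] [LieAlgebra F S] : Prop :=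
  ∀ (s v : S) (c : F), v ≠ 0 → ⁅s, v⁆ = c • v → c = 0

namespace LieAlgebra.NonSplit

variable {F S : Type*} [Field F] [LieRing S] [LieAlgebra F S]

lemma lie_lie_eq_zero_of_range_ad_le (hns : NonSplit F S) {x u : S} (hw : ⁅x, u⁆ ≠ 0)
    (hrange : LinearMap.range (ad F S x) ≤ Submodule.span F {⁅x, u⁆}) {k : S} (hk : ⁅x, k⁆ = 0)
    (y : S) : ⁅x, ⁅y, k⁆⁆ = 0 := by
  obtain ⟨c, hc⟩ := Submodule.mem_span_singleton.mp (hrange ⟨⁅k, u⁆, rfl⟩)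
  have hkw : ⁅k, ⁅x, u⁆⁆ = c • ⁅x, u⁆ := by
    rw [hc, ad_apply, leibniz_lie x k u, hk, zero_lie, zero_add]
  obtain ⟨d, hd⟩ := Submodule.mem_span_singleton.mp (hrange ⟨y, rfl⟩)
  rw [leibniz_lie x y k, hk, lie_zero, add_zero, show ⁅x, y⁆ = d • ⁅x, u⁆ from hd.symm, smul_lie,
    ← lie_skew, hkw, hns k _ c hw hkw, zero_smul, neg_zero, smul_zero]

variable [IsSimple F S] [FiniteDimensional F S]

lemma two_le_finrank_range_ad (hns : NonSplit F S) {x : S} (hx : x ≠ 0) : 2 ≤ finrank F (LinearMap.range (ad F S x)) := by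
  by_contra! hrk
  obtain ⟨u, hu⟩ : ∃ u : S, ⁅x, u⁆ ≠ 0 := by
    by_contra! hcen
    have : x ∈ center F S := fun y ↦ by rw [← lie_skew, hcen y, neg_zero]
    rw [center_eq_bot, LieSubmodule.mem_bot] at this
    exact hx this
  have hrange : LinearMap.range (ad F S x) ≤ Submodule.span F {⁅x, u⁆} :=
    (Submodule.eq_of_le_of_finrank_le
      ((Submodule.span_singleton_le_iff_mem _ _).mpr (LinearMap.mem_range_self _ u))
      (by rw [ad_apply, finrank_span_singleton hu]; omega)).ge
  -- a rank-one `ad x` would make its kernel a proper nonzero ideal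
  let I : LieIdeal F S :=
    { LinearMap.ker (ad F S x) with
      lie_mem := fun {y _} hk ↦ hns.lie_lie_eq_zero_of_range_ad_le hu hrange hk y }
  rcases IsSimple.eq_bot_or_eq_top I with hI | hI
  · have : x ∈ I := lie_self x
    rw [hI, LieSubmodule.mem_bot] at this
    exact hx this
  · have : u ∈ I := hI ▸ LieSubmodule.mem_top u
    exact hu this

lemma ker_ad_eq_span (hdim : finrank F S = 3) (hns : NonSplit F S) {x : S} (hx : x ≠ 0) :
    LinearMap.ker (ad F S x) = Submodule.span F {x} := by
  have := LinearMap.finrank_range_add_finrank_ker (ad F S x)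
  have := hns.two_le_finrank_range_ad hx
  refine (Submodule.eq_of_le_of_finrank_le ?_ ?_).symm
  · simp
  · rw [finrank_span_singleton hx]; omega

lemma exists_lie_lie_eq (hdim : finrank F S = 3) (hns : NonSplit F S) {s : S} (hs : s ≠ 0) :
    ∃ (u : S) (a b : F), (∀ c : F, c • u ≠ ⁅s, u⁆) ∧ ⁅s, ⁅s, u⁆⁆ = a • u + b • ⁅s, u⁆ := by
  have hker := hns.ker_ad_eq_span hdim hs
  have hrk : finrank F (LinearMap.range (ad F S s)) = 2 := by
    have := LinearMap.finrank_range_add_finrank_ker (ad F S s)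
    rw [hker, finrank_span_singleton hs] at this
    omega
  obtain ⟨u, ⟨v, rfl⟩, hu⟩ :
      ∃ u ∈ LinearMap.range (ad F S s), u ∉ LinearMap.ker (ad F S s) := by
    refine SetLike.not_le_iff_exists.mp fun hle ↦ ?_
    have := Submodule.finrank_mono hle
    rw [hrk, hker, finrank_span_singleton hs] at this
    omega
  set u := ad F S s v
  have hu₀ : u ≠ 0 := fun h ↦ hu (by simp [h])
  have hind : ∀ c : F, c • u ≠ ⁅s, u⁆ := by
    intro c hc
    rw [hns s u c hu₀ hc.symm, zero_smul] at hc
    exact hu hc.symm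
  have hspan : Submodule.span F {u, ⁅s, u⁆} = LinearMap.range (ad F S s) := by
    refine Submodule.eq_of_le_of_finrank_le ?_ ?_
    · rw [Submodule.span_le, Set.insert_subset_iff, Set.singleton_subset_iff]
      exact ⟨LinearMap.mem_range_self _ v, LinearMap.mem_range_self _ u⟩
    · have hli := (LinearIndependent.pair_iff' hu₀).mpr hind
      rw [hrk, ← Matrix.range_cons_cons_empty, finrank_span_eq_card hli, Fintype.card_fin]
  obtain ⟨a, b, hab⟩ := Submodule.mem_span_pair.mp (hspan ▸ LinearMap.mem_range_self _ ⁅s, u⁆)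
  exact ⟨u, a, b, hind, hab.symm⟩

lemma exists_lie_eq_smul (hdim : finrank F S = 3) (hns : NonSplit F S) {s : S} (hs : s ≠ 0) :
    ∃ (u w : S) (a γ : F), a ≠ 0 ∧ γ ≠ 0 ∧ ⁅s, u⁆ = w ∧ ⁅s, w⁆ = a • u ∧ ⁅u, w⁆ = γ • s := by
  obtain ⟨u, a, b, hind, hsw⟩ := hns.exists_lie_lie_eq hdim hs
  set w := ⁅s, u⁆
  have hu : u ≠ 0 := by rintro rfl; exact hind 0 (by simp [w])
  have huw : ⁅u, w⁆ ≠ 0 := fun h ↦ by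
    obtain ⟨c, hc⟩ := Submodule.mem_span_singleton.mp
      (hns.ker_ad_eq_span hdim hu ▸ LinearMap.mem_ker.mpr h)
    exact hind c hc
  have hb : b = 0 := hns s _ b huw <| by
    rw [leibniz_lie s u w, hsw, lie_self, zero_add, lie_add, lie_smul, lie_smul, lie_self,
      smul_zero, zero_add]
  have hker := hns.ker_ad_eq_span hdim hs
  rw [hb, zero_smul, add_zero] at hsw
  obtain ⟨γ, hγ⟩ : ∃ γ : F, γ • s = ⁅u, w⁆ := by
    refine Submodule.mem_span_singleton.mp (hker ▸ LinearMap.mem_ker.mpr ?_)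
    rw [ad_apply, leibniz_lie s u w, hsw, lie_self, zero_add, lie_smul, lie_self, smul_zero]
  refine ⟨u, w, a, γ, fun ha ↦ ?_, fun hγ₀ ↦ huw (by rw [← hγ, hγ₀, zero_smul]), rfl, hsw,
    hγ.symm⟩
  obtain ⟨c, hc⟩ := Submodule.mem_span_singleton.mp
    (hker ▸ LinearMap.mem_ker.mpr (by rw [ad_apply, hsw, ha, zero_smul]) : w ∈ _)
  have hc₀ : -c = 0 := hns u s (-c) hs (by rw [← lie_skew, neg_smul, hc])
  exact hind 0 (by rw [← hc, neg_eq_zero.mp hc₀, zero_smul, zero_smul])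

lemma exists_hasEigenvalue_toEnd_sq [CharZero F] (hdim : finrank F S = 3) (hns : NonSplit F S)
    {R : Type*} [AddCommGroup R] [Module F R] [LieRingModule S R] [LieModule F S R]
    [FiniteDimensional F R] [Nontrivial R] (s : S) :
    ∃ c : F, (toEnd F S R s ^ 2).HasEigenvalue c := by
  rcases eq_or_ne s 0 with rfl | hs
  · obtain ⟨v, hv⟩ := exists_ne (0 : R)
    exact ⟨0, Module.End.hasEigenvalue_of_hasEigenvector
      ⟨Module.End.mem_eigenspace_iff.mpr (by simp), hv⟩⟩
  · obtain ⟨u, w, a, γ, ha, hγ, hsu, hsw, huw⟩ := hns.exists_lie_eq_smul hdim hs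
    exact LieModule.exists_hasEigenvalue_toEnd_sq ha hγ hsu hsw huw

end LieAlgebra.NonSplit

theorem gein_invariant_subspace_general {F : Type*} [Field F] [CharZero F]
    {S : Type*} [LieRing S] [LieAlgebra F S] [Module.Finite F S]
    (hdim : Module.finrank F S = 3) (hsimple : LieAlgebra.IsSimple F S)
    (hnonsplit : ∀ (s v : S) (c : F), v ≠ 0 → ⁅s, v⁆ = c • v → c = 0)
    {R : Type*} [AddCommGroup R] [Module F R] [LieRingModule S R] [LieModule F S R]
    [Module.Finite F R] (hRnt : Nontrivial R) :
    ∀ s : S, ∃ U : Submodule F R, U ≠ ⊥ ∧ Module.finrank F U ≤ 2 ∧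
      ∀ u ∈ U, ⁅s, u⁆ ∈ U := by
  intro s
  have := hsimple
  have := hRnt
  obtain ⟨c, hc⟩ := LieAlgebra.NonSplit.exists_hasEigenvalue_toEnd_sq hdim hnonsplit (R := R) s
  exact (toEnd F S R s).exists_invariant_finrank_le_two hc

/-- Gein's lemma: let `S` be a three-dimensional non-split simple Lie algebra over
a field `F` of characteristic zero (non-split: no `ad s` has a nonzero eigenvalue
in `F`), and let `R` be a finite-dimensional irreducible `S`-module. Then for any
`s ∈ S`, `R` has a nonzero `s`-invariant subspace of dimension at most two. -/
theorem gein_invariant_subspace {F : Type*} [Field F] [CharZero F]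
    {S : Type*} [LieRing S] [LieAlgebra F S] [Module.Finite F S]
    (hdim : Module.finrank F S = 3) (hsimple : LieAlgebra.IsSimple F S)
    (hnonsplit : ∀ (s v : S) (c : F), v ≠ 0 → ⁅s, v⁆ = c • v → c = 0)
    {R : Type*} [AddCommGroup R] [Module F R] [LieRingModule S R] [LieModule F S R]
    [Module.Finite F R] (hRnt : Nontrivial R)
    (hirr : ∀ U : LieSubmodule F S R, U = ⊥ ∨ U = ⊤) :
    ∀ s : S, ∃ U : Submodule F R, U ≠ ⊥ ∧ Module.finrank F U ≤ 2 ∧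
      ∀ u ∈ U, ⁅s, u⁆ ∈ U :=
  gein_invariant_subspace_general hdim hsimple hnonsplit hRnt
end
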